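/- Let V be an elementary unregularized vector field on the scale (H_k), and suppose w ∈ C⁰(I_T,H_1) ∩ C¹(I_T,H_0) is a solution of ∂_s w = V(w) such that there exists a constant κ with ‖∂_s w‖_{L²(I_T,H_0)} ≤ κ. Then for every 0 < T' < T there exists a constant c = c(κ,T') such that ‖w‖_{C⁰(I_{T'},H_1) ∩ C¹(I_{T'},H_0)} ≤ c. -/

import Mathlib

open MeasureTheory Set

namespace NLGF

variable {X : Type*} [AddCommGroup X] [Module ℝ X]

/-- A *moving frame* on the scale `(Mem, nrm)` (where `Mem k`/`nrm k` are membership in and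
norm of the `k`-th level `H_k` of the scale): a family of isomorphisms `Φ(x) : H_0 → H_0`,
`x ∈ H_1`, together with derivatives `DΦ(x) : H_0 × H_0 → H_0`, satisfying the
properties (Φ1)–(Φ6) of Albers–Frauenfelder–Schlenk. -/
structure MovingFrame (Mem : ℤ → X → Prop) (nrm : ℤ → X → ℝ) : Type _ where
  Φ : X → X → X
  Φinv : X → X → X
  DΦ : X → X → X → X
  -- `Φ x`, `Φinv x` are linear on `H_0`, `DΦ x` is bilinear on `H_0 × H_0`
  add_Φ : ∀ x v w, Mem 1 x → Mem 0 v → Mem 0 w → Φ x (v + w) = Φ x v + Φ x w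
  smul_Φ : ∀ x (a : ℝ) v, Mem 1 x → Mem 0 v → Φ x (a • v) = a • Φ x v
  add_Φinv : ∀ x v w, Mem 1 x → Mem 0 v → Mem 0 w → Φinv x (v + w) = Φinv x v + Φinv x w
  smul_Φinv : ∀ x (a : ℝ) v, Mem 1 x → Mem 0 v → Φinv x (a • v) = a • Φinv x v
  add_DΦ_right : ∀ x h v w, Mem 1 x → Mem 0 h → Mem 0 v → Mem 0 w →
    DΦ x h (v + w) = DΦ x h v + DΦ x h w
  smul_DΦ_right : ∀ x h (a : ℝ) v, Mem 1 x → Mem 0 h → Mem 0 v →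
    DΦ x h (a • v) = a • DΦ x h v
  add_DΦ_left : ∀ x h g v, Mem 1 x → Mem 0 h → Mem 0 g → Mem 0 v →
    DΦ x (h + g) v = DΦ x h v + DΦ x g v
  smul_DΦ_left : ∀ x (a : ℝ) h v, Mem 1 x → Mem 0 h → Mem 0 v →
    DΦ x (a • h) v = a • DΦ x h v
  mem_Φ : ∀ x v, Mem 1 x → Mem 0 v → Mem 0 (Φ x v)
  mem_Φinv : ∀ x v, Mem 1 x → Mem 0 v → Mem 0 (Φinv x v)
  mem_DΦ : ∀ x h v, Mem 1 x → Mem 0 h → Mem 0 v → Mem 0 (DΦ x h v)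
  -- (Φ1): `Φ(x) : H_0 → H_0` is an isomorphism
  Φ_left_inv : ∀ x v, Mem 1 x → Mem 0 v → Φinv x (Φ x v) = v
  Φ_right_inv : ∀ x v, Mem 1 x → Mem 0 v → Φ x (Φinv x v) = v
  bounded_Φ : ∀ x, Mem 1 x → ∃ C > 0, ∀ v, Mem 0 v →
    nrm 0 (Φ x v) ≤ C * nrm 0 v ∧ nrm 0 (Φinv x v) ≤ C * nrm 0 v
  bounded_DΦ : ∀ x, Mem 1 x → ∃ C > 0, ∀ h v, Mem 0 h → Mem 0 v →
    nrm 0 (DΦ x h v) ≤ C * (nrm 0 h * nrm 0 v)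
  -- (Φ2): `(x,v) ↦ Φ(x)v` is continuous `H_1 × H_0 → H_0`
  cont_Φ : ∀ x v, Mem 1 x → Mem 0 v → ∀ ε > 0, ∃ δ > 0, ∀ x' v', Mem 1 x' → Mem 0 v' →
    nrm 1 (x' - x) < δ → nrm 0 (v' - v) < δ → nrm 0 (Φ x' v' - Φ x v) < ε
  -- (Φ3): `DΦ(x)` is the derivative of `x ↦ Φ(x)v`
  hasDeriv_Φ : ∀ x v, Mem 1 x → Mem 0 v → ∀ ε > 0, ∃ δ > 0, ∀ h, Mem 1 h → nrm 1 h < δ →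
    nrm 0 (Φ (x + h) v - Φ x v - DΦ x h v) ≤ ε * nrm 1 h
  -- (Φ4): `(x,h,v) ↦ DΦ(x)(h,v)` is continuous `H_1 × H_0 × H_0 → H_0`
  cont_DΦ : ∀ x h v, Mem 1 x → Mem 0 h → Mem 0 v → ∀ ε > 0, ∃ δ > 0,
    ∀ x' h' v', Mem 1 x' → Mem 0 h' → Mem 0 v' →
      nrm 1 (x' - x) < δ → nrm 0 (h' - h) < δ → nrm 0 (v' - v) < δ →
      nrm 0 (DΦ x' h' v' - DΦ x h v) < ε
  -- (Φ5): `Φ(x)` restricts to an isomorphism of `H_1`, continuously in `(x,v) ∈ H_1 × H_1`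
  mem_Φ_one : ∀ x v, Mem 1 x → Mem 1 v → Mem 1 (Φ x v)
  mem_Φinv_one : ∀ x v, Mem 1 x → Mem 1 v → Mem 1 (Φinv x v)
  cont_Φ_one : ∀ x v, Mem 1 x → Mem 1 v → ∀ ε > 0, ∃ δ > 0, ∀ x' v', Mem 1 x' → Mem 1 v' →
    nrm 1 (x' - x) < δ → nrm 1 (v' - v) < δ →
    nrm 1 (Φ x' v' - Φ x v) < ε ∧ nrm 1 (Φinv x' v' - Φinv x v) < ε
  -- (Φ6): uniform bounds on balls of `H_1`
  uniform_bound : ∀ κ > 0, ∃ c0 > 0, ∀ x, Mem 1 x → nrm 1 x ≤ κ →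
    (∀ v, Mem 0 v → nrm 0 (Φ x v) ≤ c0 * nrm 0 v ∧ nrm 0 (Φinv x v) ≤ c0 * nrm 0 v) ∧
    (∀ v, Mem 1 v → nrm 1 (Φ x v) ≤ c0 * nrm 1 v ∧ nrm 1 (Φinv x v) ≤ c0 * nrm 1 v) ∧
    (∀ h v, Mem 0 h → Mem 0 v → nrm 0 (DΦ x h v) ≤ c0 * (nrm 0 h * nrm 0 v))

/-- An *unregularized vector field* on the scale `(Mem, nrm)` with fundamental operator `F`:
a map `V ∈ C⁰(H_1,H_0) ∩ C⁰(H_2,H_1)`, differentiable as a map `H_1 → H_0`, satisfying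
properties (V1)–(V3) of Albers–Frauenfelder–Schlenk with respect to a moving frame `Φ`. -/
structure UVF (Mem : ℤ → X → Prop) (nrm : ℤ → X → ℝ) (F : X → X) : Type _ where
  V : X → X
  DV : X → X → X
  frame : MovingFrame Mem nrm
  P : X → X → X
  -- `V ∈ C⁰(H_1,H_0) ∩ C⁰(H_2,H_1)`
  mem_V_one : ∀ x, Mem 1 x → Mem 0 (V x)
  mem_V_two : ∀ x, Mem 2 x → Mem 1 (V x)
  cont_V_one : ∀ x, Mem 1 x → ∀ ε > 0, ∃ δ > 0, ∀ x', Mem 1 x' →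
    nrm 1 (x' - x) < δ → nrm 0 (V x' - V x) < ε
  cont_V_two : ∀ x, Mem 2 x → ∀ ε > 0, ∃ δ > 0, ∀ x', Mem 2 x' →
    nrm 2 (x' - x) < δ → nrm 1 (V x' - V x) < ε
  -- `V : H_1 → H_0` is differentiable with differential `DV(x) : H_1 → H_0`
  add_DV : ∀ x h g, Mem 1 x → Mem 1 h → Mem 1 g → DV x (h + g) = DV x h + DV x g
  smul_DV : ∀ x (a : ℝ) h, Mem 1 x → Mem 1 h → DV x (a • h) = a • DV x h
  mem_DV : ∀ x h, Mem 1 x → Mem 1 h → Mem 0 (DV x h)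
  hasDeriv_V : ∀ x, Mem 1 x → ∀ ε > 0, ∃ δ > 0, ∀ h, Mem 1 h → nrm 1 h < δ →
    nrm 0 (V (x + h) - V x - DV x h) ≤ ε * nrm 1 h
  -- (V1): `(x,x̂) ↦ DV(x)x̂` is continuous `H_1 × H_1 → H_0`
  cont_DV : ∀ x h, Mem 1 x → Mem 1 h → ∀ ε > 0, ∃ δ > 0, ∀ x' h', Mem 1 x' → Mem 1 h' →
    nrm 1 (x' - x) < δ → nrm 1 (h' - h) < δ → nrm 0 (DV x' h' - DV x h) < ε
  -- (V2): `Φ(x) DV(x) Φ(x)⁻¹ - F : H_1 → H_0` extends to a continuous linear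
  -- operator `P(x) : H_0 → H_0`, with `(x,x̂) ↦ P(x)x̂` continuous `H_1 × H_0 → H_0`
  add_P : ∀ x v w, Mem 1 x → Mem 0 v → Mem 0 w → P x (v + w) = P x v + P x w
  smul_P : ∀ x (a : ℝ) v, Mem 1 x → Mem 0 v → P x (a • v) = a • P x v
  mem_P : ∀ x v, Mem 1 x → Mem 0 v → Mem 0 (P x v)
  bounded_P : ∀ x, Mem 1 x → ∃ C > 0, ∀ v, Mem 0 v → nrm 0 (P x v) ≤ C * nrm 0 v
  extends_P : ∀ x h, Mem 1 x → Mem 1 h → P x h = frame.Φ x (DV x (frame.Φinv x h)) - F h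
  cont_P : ∀ x v, Mem 1 x → Mem 0 v → ∀ ε > 0, ∃ δ > 0, ∀ x' v', Mem 1 x' → Mem 0 v' →
    nrm 1 (x' - x) < δ → nrm 0 (v' - v) < δ → nrm 0 (P x' v' - P x v) < ε
  -- (V3): bounds on balls of `H_1`
  bound_V3 : ∀ κ > 0, ∃ c1 > 0,
    (∀ x, Mem 1 x → nrm 1 x ≤ κ → ∀ v, Mem 0 v → nrm 0 (P x v) ≤ c1 * nrm 0 v) ∧
    (∀ x, Mem 2 x → nrm 1 x ≤ κ → nrm 2 x ≤ c1 * (nrm 1 (V x) + 1))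

/-- An unregularized vector field is *elementary with constant `c`* if its moving frame is
the identity and (V3') holds with the uniform constant `c`. -/
def UVF.ElementaryWith {Mem : ℤ → X → Prop} {nrm : ℤ → X → ℝ} {F : X → X}
    (W : UVF Mem nrm F) (c : ℝ) : Prop :=
  (∀ x v, W.frame.Φ x v = v) ∧ (∀ x v, W.frame.Φinv x v = v) ∧
  (∀ x h v, W.frame.DΦ x h v = 0) ∧ 0 < c ∧
  (∀ x, Mem 1 x →
    (∀ v, Mem 0 v → nrm 0 (W.P x v) ≤ c * nrm 0 v) ∧ nrm 1 x ≤ c * (nrm 0 (W.V x) + 1)) ∧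
  (∀ x, Mem 2 x → nrm 2 x ≤ c * (nrm 1 (W.V x) + nrm 1 x + 1))

/-- An *elementary* unregularized vector field: the moving frame in (V2) can be chosen to be
the identity, and the strengthened uniform bound (V3') holds. -/
def UVF.Elementary {Mem : ℤ → X → Prop} {nrm : ℤ → X → ℝ} {F : X → X}
    (W : UVF Mem nrm F) : Prop :=
  ∃ c : ℝ, W.ElementaryWith c

/-- `w ∈ C⁰(I, H_k)` : the curve `w` takes values in `H_k` and is continuous on `I`
with respect to the `H_k`-norm. -/
def ContCurveOn (Mem : ℤ → X → Prop) (nrm : ℤ → X → ℝ) (k : ℤ) (I : Set ℝ) (w : ℝ → X) :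
    Prop :=
  (∀ s ∈ I, Mem k (w s)) ∧
  ∀ s ∈ I, ∀ ε > 0, ∃ δ > 0, ∀ s' ∈ I, |s' - s| < δ → nrm k (w s' - w s) < ε

/-- The curve `w` is differentiable on `I` in the `H_k`-norm, with derivative `dw`. -/
def HasDerivCurveOn (nrm : ℤ → X → ℝ) (k : ℤ) (I : Set ℝ) (w dw : ℝ → X) : Prop :=
  ∀ s ∈ I, ∀ ε > 0, ∃ δ > 0, ∀ s' ∈ I, s' ≠ s → |s' - s| < δ →
    nrm k ((s' - s)⁻¹ • (w s' - w s) - dw s) < ε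

/-- `w ∈ C⁰(I_T, H_1) ∩ C¹(I_T, H_0)` is a solution of the unregularized gradient flow
equation `∂ₛ w = V(w)` on `I_T = (-T,T)`. -/
def IsGradSol (Mem : ℤ → X → Prop) (nrm : ℤ → X → ℝ) (Vf : X → X) (T : ℝ) (w : ℝ → X) :
    Prop :=
  ContCurveOn Mem nrm 1 (Ioo (-T) T) w ∧
  HasDerivCurveOn nrm 0 (Ioo (-T) T) w (fun s => Vf (w s)) ∧
  ContCurveOn Mem nrm 0 (Ioo (-T) T) (fun s => Vf (w s))

end NLGF

open scoped ENNReal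

namespace NLGF

/-- `f : ℕ → (0,∞)` is monotone increasing and unbounded. -/
def GoodWeight (f : ℕ → ℝ) : Prop :=
  (∀ ν, 0 < f ν) ∧ Monotone f ∧ ∀ c : ℝ, ∃ ν, c < f ν

/-- `ζ : ℕ → {±1}`. -/
def Signs (ζ : ℕ → ℝ) : Prop := ∀ ν, ζ ν = 1 ∨ ζ ν = -1

/-- Membership in `H_k = ℓ²_{f^k}` : `∑ f(ν)^k x_ν² < ∞`. -/
def sMem (f : ℕ → ℝ) (k : ℤ) (x : ℕ → ℝ) : Prop :=
  Summable fun ν => f ν ^ k * x ν ^ 2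

/-- The norm of `H_k = ℓ²_{f^k}`. -/
noncomputable def snrm (f : ℕ → ℝ) (k : ℤ) (x : ℕ → ℝ) : ℝ :=
  Real.sqrt (∑' ν, f ν ^ k * x ν ^ 2)

/-- The fundamental operator `(F x)_ν = ζ(ν) √(f(ν)) x_ν`, an isometry `H_{k+1} → H_k`. -/
noncomputable def sF (f ζ : ℕ → ℝ) (x : ℕ → ℝ) : ℕ → ℝ :=
  fun ν => ζ ν * Real.sqrt (f ν) * x ν

/-- The squared `L²(I, H_k)`-norm of a curve `u`, as an extended real. -/
noncomputable def eL2 (f : ℕ → ℝ) (k : ℤ) (I : Set ℝ) (u : ℝ → ℕ → ℝ) : ℝ≥0∞ :=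
  ∫⁻ s in I, ENNReal.ofReal ((snrm f k (u s)) ^ 2)

/-- `g` is a weak derivative of `u` on the interval `I` (componentwise, against smooth
compactly supported test functions). -/
def WeakDerivOn (I : Set ℝ) (u g : ℝ → ℕ → ℝ) : Prop :=
  ∀ (ν : ℕ) (φ : ℝ → ℝ), ContDiff ℝ (⊤ : ℕ∞) φ → HasCompactSupport φ → tsupport φ ⊆ I →
    ∫ s in I, u s ν * deriv φ s = - ∫ s in I, g s ν * φ s

end NLGF

/-!
Write `v = V ∘ w = ∂ₛw`. An elementary field has `DV(x) = F + P(x)` with `F` diagonal, so the mean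
value theorem along segments, together with the continuity of `P`, shows that each coordinate
solves the scalar linear equation `v_ν' = ζ_ν √f_ν v_ν + (P(w) v)_ν`. Integrating by variation of constants forward from `a` when the
mode is stable and backward from `b` when it is unstable gives, whatever the sign of `ζ_ν`,
`|v_ν(s)| ≤ |v_ν(a)| + |v_ν(b)| + ∫_a^b |(P(w) v)_ν|` for `a ≤ s ≤ b`. Squaring, Cauchy–Schwarz and
summing over `ν` give `‖v(s)‖₀² ≤ 3‖v(a)‖₀² + 3‖v(b)‖₀² + 3(b - a) c² ‖v‖²_{L²}`. The `L²` bound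
supplies `a ∈ (-T, -T')` and `b ∈ (T', T)` with `‖v‖₀² ≤ (κ² + 1)/(T - T')`, which bounds `‖v‖₀`
on `I_{T'}`; then (V3') bounds `‖w‖₁`, and `‖w‖₀ ≤ f(0)^{-1/2} ‖w‖₁`.
-/

namespace NLGF

theorem abs_le_abs_add_integral_of_hasDerivAt_of_nonpos {φ h : ℝ → ℝ} {m p q : ℝ}
    (hm : m ≤ 0) (hpq : p ≤ q) (hφ : ∀ r ∈ Icc p q, HasDerivAt φ (m * φ r + h r) r)
    (hh : ContinuousOn h (Icc p q)) :
    |φ q| ≤ |φ p| + ∫ r in p..q, |h r| := by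
  set E : ℝ → ℝ := fun r => Real.exp (m * (q - r))
  have hE_le : ∀ r ≤ q, E r ≤ 1 := fun r hr =>
    Real.exp_le_one_iff.mpr (mul_nonpos_of_nonpos_of_nonneg hm (by linarith))
  have hEh : ContinuousOn (fun r => E r * h r) (Icc p q) := by fun_prop
  -- variation of constants: `E φ` is a primitive of `E h`
  have hderiv : ∀ r ∈ uIcc p q, HasDerivAt (fun r => E r * φ r) (E r * h r) r := by
    intro r hr
    rw [uIcc_of_le hpq] at hr
    have hE : HasDerivAt E (E r * (m * -1)) r :=
      (((hasDerivAt_id' r).const_sub q).const_mul m).exp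
    exact (hE.mul (hφ r hr)).congr_deriv (by ring)
  have hformula : φ q = E p * φ p + ∫ r in p..q, E r * h r := by
    rw [intervalIntegral.integral_eq_sub_of_hasDerivAt hderiv
      ((hEh.intervalIntegrable_of_Icc hpq))]
    simp [E]
  calc |φ q| ≤ |E p * φ p| + |∫ r in p..q, E r * h r| := hformula ▸ abs_add_le _ _
    _ ≤ |φ p| + ∫ r in p..q, |h r| := by
      refine add_le_add ?_ ?_
      · rw [abs_mul, abs_of_pos (Real.exp_pos _)]
        exact mul_le_of_le_one_left (abs_nonneg _) (hE_le p hpq)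
      · refine (intervalIntegral.abs_integral_le_integral_abs hpq).trans ?_
        refine intervalIntegral.integral_mono_on hpq (hEh.abs.intervalIntegrable_of_Icc hpq)
          (hh.abs.intervalIntegrable_of_Icc hpq) fun r hr => ?_
        rw [abs_mul, abs_of_pos (Real.exp_pos _)]
        exact mul_le_of_le_one_left (abs_nonneg _) (hE_le r hr.2)

theorem abs_le_abs_add_integral_of_hasDerivAt_of_nonneg {φ h : ℝ → ℝ} {m p q : ℝ}
    (hm : 0 ≤ m) (hpq : p ≤ q) (hφ : ∀ r ∈ Icc p q, HasDerivAt φ (m * φ r + h r) r)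
    (hh : ContinuousOn h (Icc p q)) :
    |φ p| ≤ |φ q| + ∫ r in p..q, |h r| := by
  have hφ' : ∀ r ∈ Icc (-q) (-p),
      HasDerivAt (fun r => φ (-r)) (-m * φ (-r) + -h (-r)) r := by
    intro r hr
    exact ((hφ (-r) ⟨by linarith [hr.2], by linarith [hr.1]⟩).comp r
      (hasDerivAt_neg r)).congr_deriv (by ring)
  have hh' : ContinuousOn (fun r => -h (-r)) (Icc (-q) (-p)) :=
    (hh.comp continuousOn_neg fun r hr => ⟨by linarith [hr.2], by linarith [hr.1]⟩).neg
  have := abs_le_abs_add_integral_of_hasDerivAt_of_nonpos (neg_nonpos.mpr hm) (neg_le_neg hpq)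
    hφ' hh'
  simpa only [neg_neg, abs_neg, intervalIntegral.integral_comp_neg (fun r => |h r|)] using this

theorem abs_le_abs_add_abs_add_integral_of_hasDerivAt {φ h : ℝ → ℝ} {m a s b : ℝ}
    (has : a ≤ s) (hsb : s ≤ b) (hφ : ∀ r ∈ Icc a b, HasDerivAt φ (m * φ r + h r) r)
    (hh : ContinuousOn h (Icc a b)) :
    |φ s| ≤ |φ a| + |φ b| + ∫ r in a..b, |h r| := by
  have hint : IntervalIntegrable (fun r => |h r|) volume a b :=
    hh.abs.intervalIntegrable_of_Icc (has.trans hsb)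
  have hnonneg : 0 ≤ᵐ[volume.restrict (Ioc a b)] fun r => |h r| :=
    Filter.Eventually.of_forall fun r => abs_nonneg _
  rcases le_total m 0 with hm | hm
  · have := abs_le_abs_add_integral_of_hasDerivAt_of_nonpos hm has
      (fun r hr => hφ r ⟨hr.1, hr.2.trans hsb⟩) (hh.mono (Icc_subset_Icc le_rfl hsb))
    have := intervalIntegral.integral_mono_interval le_rfl has hsb hnonneg hint
    linarith [abs_nonneg (φ b)]
  · have := abs_le_abs_add_integral_of_hasDerivAt_of_nonneg hm hsb
      (fun r hr => hφ r ⟨has.trans hr.1, hr.2⟩) (hh.mono (Icc_subset_Icc has le_rfl))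
    have := intervalIntegral.integral_mono_interval has hsb le_rfl hnonneg hint
    linarith [abs_nonneg (φ a)]

theorem sq_integral_abs_le {h : ℝ → ℝ} {a b : ℝ} (hab : a ≤ b)
    (hh : ContinuousOn h (Icc a b)) :
    (∫ r in a..b, |h r|) ^ 2 ≤ (b - a) * ∫ r in a..b, h r ^ 2 := by
  rcases hab.eq_or_lt with rfl | hab
  · simp
  have hvol : volume (Ioc a b) = ENNReal.ofReal (b - a) := Real.volume_Ioc
  have jensen := (convexOn_pow 2).map_set_average_le (continuous_pow 2).continuousOn isClosed_Ici
    (μ := volume) (t := Ioc a b) (f := fun r => |h r|) (by simp [hab]) (by simp)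
    (Filter.Eventually.of_forall fun r => abs_nonneg (h r))
    ((hh.abs.integrableOn_Icc).mono_set Ioc_subset_Icc_self)
    (((hh.abs.pow 2).integrableOn_Icc).mono_set Ioc_subset_Icc_self)
  simp only [setAverage_eq, measureReal_def, hvol, ENNReal.toReal_ofReal (sub_nonneg.mpr hab.le),
    smul_eq_mul, sq_abs] at jensen
  rw [intervalIntegral.integral_of_le hab.le, intervalIntegral.integral_of_le hab.le]
  have hba : 0 < b - a := sub_pos.mpr hab
  rw [mul_pow, inv_pow, ← div_eq_inv_mul, ← div_eq_inv_mul, div_le_div_iff₀ (by positivity) hba]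
    at jensen
  nlinarith

theorem sum_sq_le_of_hasDerivAt {ι : Type*} (N : Finset ι) {v g : ℝ → ι → ℝ} {m : ι → ℝ}
    {a s b : ℝ} (has : a ≤ s) (hsb : s ≤ b)
    (hv : ∀ ν ∈ N, ∀ r ∈ Icc a b, HasDerivAt (v · ν) (m ν * v r ν + g r ν) r)
    (hg : ∀ ν ∈ N, ContinuousOn (g · ν) (Icc a b)) :
    ∑ ν ∈ N, v s ν ^ 2 ≤ 3 * ∑ ν ∈ N, v a ν ^ 2 + 3 * ∑ ν ∈ N, v b ν ^ 2
      + 3 * (b - a) * ∫ r in a..b, ∑ ν ∈ N, g r ν ^ 2 := by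
  have hab := has.trans hsb
  have hmode : ∀ ν ∈ N, v s ν ^ 2 ≤ 3 * v a ν ^ 2 + 3 * v b ν ^ 2
      + 3 * (b - a) * ∫ r in a..b, g r ν ^ 2 := by
    intro ν hν
    set A := ∫ r in a..b, |g r ν|
    have hA : 0 ≤ A := intervalIntegral.integral_nonneg hab fun r _ => abs_nonneg _
    have hφ := abs_le_abs_add_abs_add_integral_of_hasDerivAt has hsb (hv ν hν) (hg ν hν)
    have hCS := sq_integral_abs_le hab (hg ν hν)
    have hsq : v s ν ^ 2 ≤ (|v a ν| + |v b ν| + A) ^ 2 := by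
      rw [← sq_abs (v s ν)]
      exact pow_le_pow_left₀ (abs_nonneg _) hφ 2
    nlinarith [sq_abs (v a ν), sq_abs (v b ν), sq_nonneg (|v a ν| - |v b ν|),
      sq_nonneg (|v a ν| - A), sq_nonneg (|v b ν| - A)]
  rw [intervalIntegral.integral_finsetSum (f := fun ν r => g r ν ^ 2) fun ν hν =>
    ((hg ν hν).pow 2).intervalIntegrable_of_Icc hab]
  refine (Finset.sum_le_sum hmode).trans_eq ?_
  simp only [Finset.sum_add_distrib, Finset.mul_sum]

theorem setIntegral_le_mul_of_le_mul_of_lintegral_le {α : Type*} [MeasurableSpace α]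
    {μ : Measure α} {S : Set α} (hS : MeasurableSet S) {G g : α → ℝ} {C K : ℝ}
    (hC : 0 ≤ C) (hK : 0 ≤ K) (hG : IntegrableOn G S μ) (hG0 : ∀ r ∈ S, 0 ≤ G r)
    (hGg : ∀ r ∈ S, G r ≤ C * g r)
    (hg : ∫⁻ r in S, ENNReal.ofReal (g r) ∂μ ≤ ENNReal.ofReal K) :
    ∫ r in S, G r ∂μ ≤ C * K := by
  rw [← ENNReal.ofReal_le_ofReal_iff (by positivity)]
  calc ENNReal.ofReal (∫ r in S, G r ∂μ) = ∫⁻ r in S, ENNReal.ofReal (G r) ∂μ :=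
        ofReal_integral_eq_lintegral_ofReal hG ((ae_restrict_iff' hS).mpr (.of_forall hG0))
    _ ≤ ∫⁻ r in S, ENNReal.ofReal C * ENNReal.ofReal (g r) ∂μ :=
        setLIntegral_mono' hS fun r hr => by
          rw [← ENNReal.ofReal_mul hC]; exact ENNReal.ofReal_le_ofReal (hGg r hr)
    _ ≤ ENNReal.ofReal C * ENNReal.ofReal K := by
        rw [lintegral_const_mul' _ _ ENNReal.ofReal_ne_top]; gcongr
    _ = ENNReal.ofReal (C * K) := (ENNReal.ofReal_mul hC).symm

theorem exists_mem_Ioo_le_of_lintegral_le {g : ℝ → ℝ} {α β K : ℝ} (hαβ : α < β) (hK : 0 ≤ K)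
    (hg : ∫⁻ r in Ioo α β, ENNReal.ofReal (g r) ≤ ENNReal.ofReal K) :
    ∃ t ∈ Ioo α β, g t ≤ (K + 1) / (β - α) := by
  by_contra! hlarge
  have hβα : 0 < β - α := sub_pos.mpr hαβ
  have : ENNReal.ofReal (K + 1) ≤ ENNReal.ofReal K :=
    calc ENNReal.ofReal (K + 1) = ∫⁻ _ in Ioo α β, ENNReal.ofReal ((K + 1) / (β - α)) := by
          rw [setLIntegral_const, Real.volume_Ioo, ← ENNReal.ofReal_mul (by positivity),
            div_mul_cancel₀ _ hβα.ne']
      _ ≤ ∫⁻ r in Ioo α β, ENNReal.ofReal (g r) :=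
          setLIntegral_mono' measurableSet_Ioo fun r hr =>
            ENNReal.ofReal_le_ofReal (hlarge r hr).le
      _ ≤ ENNReal.ofReal K := hg
  rw [ENNReal.ofReal_le_ofReal_iff hK] at this
  linarith

theorem hasDerivWithinAt_of_forall_exists_abs_le {g : ℝ → ℝ} {g' t : ℝ} {I : Set ℝ}
    (h : ∀ ε > 0, ∃ δ > 0, ∀ r ∈ I, |r - t| < δ → |g r - g t - (r - t) * g'| ≤ ε * |r - t|) :
    HasDerivWithinAt g g' I t := by
  rw [hasDerivWithinAt_iff_isLittleO, Asymptotics.isLittleO_iff]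
  intro ε hε
  obtain ⟨δ, hδ, hg⟩ := h ε hε
  rw [eventually_nhdsWithin_iff, Metric.eventually_nhds_iff]
  exact ⟨δ, hδ, fun r hr hrI => by simpa [smul_eq_mul, mul_comm] using hg r hrI hr⟩

section Scale

variable {f : ℕ → ℝ} {k : ℤ} {x y : ℕ → ℝ}

theorem sMem_zero_iff : sMem f 0 x ↔ Summable fun ν => x ν ^ 2 := by
  simp [sMem]

theorem snrm_zero_eq : snrm f 0 x = √(∑' ν, x ν ^ 2) := by
  simp [snrm]

theorem snrm_nonneg : 0 ≤ snrm f k x := Real.sqrt_nonneg _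

theorem snrm_smul (a : ℝ) : snrm f k (a • x) = |a| * snrm f k x := by
  have : (fun ν => f ν ^ k * (a • x) ν ^ 2) = fun ν => a ^ 2 * (f ν ^ k * x ν ^ 2) := by
    funext ν; simp only [Pi.smul_apply, smul_eq_mul]; ring
  rw [snrm, this, tsum_mul_left, Real.sqrt_mul (sq_nonneg a), Real.sqrt_sq_eq_abs, snrm]

theorem sMem.smul (hx : sMem f k x) (a : ℝ) : sMem f k (a • x) := by
  have : (fun ν => f ν ^ k * (a • x) ν ^ 2) = fun ν => a ^ 2 * (f ν ^ k * x ν ^ 2) := by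
    funext ν; simp only [Pi.smul_apply, smul_eq_mul]; ring
  rw [sMem, this]
  exact hx.mul_left _

theorem sMem.add (hf : ∀ ν, 0 < f ν) (hx : sMem f k x) (hy : sMem f k y) :
    sMem f k (x + y) := by
  refine Summable.of_nonneg_of_le (fun ν => by have := hf ν; positivity) (fun ν => ?_)
    ((Summable.add hx hy).mul_left 2)
  have hfk : 0 ≤ f ν ^ k := (zpow_pos (hf ν) k).le
  have : (x ν + y ν) ^ 2 ≤ 2 * (x ν ^ 2 + y ν ^ 2) := by nlinarith [sq_nonneg (x ν - y ν)]
  simpa only [Pi.add_apply, mul_add, mul_left_comm _ (2 : ℝ)] using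
    mul_le_mul_of_nonneg_left this hfk

theorem sMem.sub (hf : ∀ ν, 0 < f ν) (hx : sMem f k x) (hy : sMem f k y) :
    sMem f k (x - y) := by
  simpa [sub_eq_add_neg] using hx.add hf (hy.smul (-1))

theorem sq_le_inv_mul_weight (hf : ∀ ν, 0 < f ν) (hmono : Monotone f) (x : ℕ → ℝ) (ν : ℕ) :
    x ν ^ 2 ≤ (f 0)⁻¹ * (f ν ^ (1 : ℤ) * x ν ^ 2) := by
  rw [zpow_one, le_inv_mul_iff₀ (hf 0)]
  exact mul_le_mul_of_nonneg_right (hmono (Nat.zero_le ν)) (sq_nonneg _)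

theorem sMem.zero_of_one (hf : ∀ ν, 0 < f ν) (hmono : Monotone f) (hx : sMem f 1 x) :
    sMem f 0 x :=
  sMem_zero_iff.mpr <| .of_nonneg_of_le (fun _ => sq_nonneg _)
    (sq_le_inv_mul_weight hf hmono x) (hx.mul_left (f 0)⁻¹)

theorem sq_snrm_zero (x : ℕ → ℝ) : snrm f 0 x ^ 2 = ∑' ν, x ν ^ 2 := by
  rw [snrm_zero_eq, Real.sq_sqrt (tsum_nonneg fun ν => sq_nonneg _)]

theorem sum_sq_le_sq_snrm_zero (hx : sMem f 0 x) (N : Finset ℕ) :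
    ∑ ν ∈ N, x ν ^ 2 ≤ snrm f 0 x ^ 2 := by
  rw [sq_snrm_zero]
  exact (sMem_zero_iff.mp hx).sum_le_tsum N fun ν _ => sq_nonneg _

theorem abs_apply_le_snrm_zero (hx : sMem f 0 x) (ν : ℕ) : |x ν| ≤ snrm f 0 x := by
  rw [← sq_le_sq₀ (abs_nonneg _) snrm_nonneg, sq_abs]
  simpa using sum_sq_le_sq_snrm_zero hx {ν}

theorem sq_snrm_zero_le_of_forall_sum_le {B : ℝ} (h : ∀ N : Finset ℕ, ∑ ν ∈ N, x ν ^ 2 ≤ B) :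
    snrm f 0 x ^ 2 ≤ B := by
  rw [sq_snrm_zero]
  exact tsum_le_of_sum_le' (by simpa using h ∅) h

theorem snrm_zero_le (hf : ∀ ν, 0 < f ν) (hmono : Monotone f) (hx : sMem f 1 x) :
    snrm f 0 x ≤ √(f 0)⁻¹ * snrm f 1 x := by
  have hle : ∑' ν, x ν ^ 2 ≤ (f 0)⁻¹ * ∑' ν, f ν ^ (1 : ℤ) * x ν ^ 2 := by
    rw [← tsum_mul_left]
    exact (sMem_zero_iff.mp (hx.zero_of_one hf hmono)).tsum_le_tsum
      (sq_le_inv_mul_weight hf hmono x) (hx.mul_left _)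
  rw [snrm_zero_eq, snrm, ← Real.sqrt_mul (inv_nonneg.mpr (hf 0).le)]
  exact Real.sqrt_le_sqrt hle

end Scale

namespace UVF.ElementaryWith

variable {X : Type*} [AddCommGroup X] [Module ℝ X] {Mem : ℤ → X → Prop} {nrm : ℤ → X → ℝ}
  {F : X → X} {W : UVF Mem nrm F} {c : ℝ}

theorem pos (hW : W.ElementaryWith c) : 0 < c := hW.2.2.2.1

theorem nrm_P_le (hW : W.ElementaryWith c) {x v : X} (hx : Mem 1 x) (hv : Mem 0 v) :
    nrm 0 (W.P x v) ≤ c * nrm 0 v :=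
  (hW.2.2.2.2.1 x hx).1 v hv

theorem nrm_one_le (hW : W.ElementaryWith c) {x : X} (hx : Mem 1 x) :
    nrm 1 x ≤ c * (nrm 0 (W.V x) + 1) :=
  (hW.2.2.2.2.1 x hx).2

end UVF.ElementaryWith

section ElementaryField

variable {f ζ : ℕ → ℝ} {W : UVF (sMem f) (snrm f) (sF f ζ)} {c : ℝ}

theorem UVF.ElementaryWith.DV_eq (hW : W.ElementaryWith c) {x h : ℕ → ℝ} (hx : sMem f 1 x)
    (hh : sMem f 1 h) : W.DV x h = W.P x h + sF f ζ h := by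
  rw [W.extends_P x h hx hh, hW.1, hW.2.1, sub_add_cancel]

theorem UVF.hasDerivAt_V_apply_line (hf : ∀ ν, 0 < f ν) {x Δ : ℕ → ℝ} (hx : sMem f 1 x)
    (hΔ : sMem f 1 Δ) (ν : ℕ) (t : ℝ) :
    HasDerivAt (fun t => W.V (x + t • Δ) ν) (W.DV (x + t • Δ) Δ ν) t := by
  have hxt : sMem f 1 (x + t • Δ) := hx.add hf (hΔ.smul t)
  refine hasDerivWithinAt_univ.mp (hasDerivWithinAt_of_forall_exists_abs_le fun ε hε => ?_)
  set D := snrm f 1 Δ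
  have hD : 0 ≤ D := snrm_nonneg
  obtain ⟨δ, hδ, hV⟩ := W.hasDeriv_V _ hxt (ε / (D + 1)) (by positivity)
  refine ⟨δ / (D + 1), by positivity, fun r _ hr => ?_⟩
  have hstep : x + r • Δ = x + t • Δ + (r - t) • Δ := by rw [sub_smul]; abel
  have hsmall : snrm f 1 ((r - t) • Δ) < δ := by
    rw [snrm_smul]
    calc |r - t| * D ≤ |r - t| * (D + 1) := by nlinarith [abs_nonneg (r - t)]
      _ < δ := (lt_div_iff₀ (by positivity)).mp hr
  have hrem := hV _ (hΔ.smul _) hsmall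
  have hmem : sMem f 0 (W.V (x + t • Δ + (r - t) • Δ) - W.V (x + t • Δ)
      - W.DV (x + t • Δ) ((r - t) • Δ)) :=
    ((W.mem_V_one _ (hxt.add hf (hΔ.smul _))).sub hf (W.mem_V_one _ hxt)).sub hf
      (W.mem_DV _ _ hxt (hΔ.smul _))
  have hcomp := (abs_apply_le_snrm_zero hmem ν).trans hrem
  rw [W.smul_DV _ _ _ hxt hΔ, ← hstep, snrm_smul] at hcomp
  calc |W.V (x + r • Δ) ν - W.V (x + t • Δ) ν - (r - t) * W.DV (x + t • Δ) Δ ν|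
      ≤ ε / (D + 1) * (|r - t| * D) := by simpa using hcomp
    _ ≤ ε * |r - t| := by
      rw [div_mul_eq_mul_div, div_le_iff₀ (by positivity)]
      nlinarith [abs_nonneg (r - t)]

theorem UVF.ElementaryWith.exists_V_sub_V_eq (hf : ∀ ν, 0 < f ν) (hW : W.ElementaryWith c)
    {x x' : ℕ → ℝ} (hx : sMem f 1 x) (hx' : sMem f 1 x') (ν : ℕ) :
    ∃ τ ∈ Ioo (0 : ℝ) 1,
      W.V x' ν - W.V x ν = sF f ζ (x' - x) ν + W.P (x + τ • (x' - x)) (x' - x) ν := by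
  have hΔ : sMem f 1 (x' - x) := hx'.sub hf hx
  obtain ⟨τ, hτ, hslope⟩ := exists_hasDerivAt_eq_slope (fun t => W.V (x + t • (x' - x)) ν)
    _ one_pos (fun t _ => (W.hasDerivAt_V_apply_line hf hx hΔ ν t).continuousAt.continuousWithinAt)
    (fun t _ => W.hasDerivAt_V_apply_line hf hx hΔ ν t)
  refine ⟨τ, hτ, ?_⟩
  rw [hW.DV_eq (hx.add hf (hΔ.smul τ)) hΔ] at hslope
  simp only [one_smul, zero_smul, add_zero, add_sub_cancel, sub_zero, div_one] at hslope
  rw [← hslope, Pi.add_apply, add_comm]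

theorem UVF.ElementaryWith.exists_abs_V_sub_V_sub_le (hf : ∀ ν, 0 < f ν) (hmono : Monotone f)
    (hW : W.ElementaryWith c) {x x' v : ℕ → ℝ} (hx : sMem f 1 x) (hx' : sMem f 1 x')
    (hv : sMem f 0 v) (r : ℝ) (ν : ℕ) :
    ∃ y, sMem f 1 y ∧ snrm f 1 (y - x) ≤ snrm f 1 (x' - x) ∧
      |W.V x' ν - W.V x ν - r * (ζ ν * √(f ν) * v ν + W.P x v ν)|
        ≤ (|ζ ν| * √(f ν) + c) * snrm f 0 (x' - x - r • v)
          + |r| * snrm f 0 (W.P y v - W.P x v) := by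
  obtain ⟨τ, hτ, hmvt⟩ := hW.exists_V_sub_V_eq hf hx hx' ν
  set y := x + τ • (x' - x)
  set e := x' - x - r • v
  have hΔ : sMem f 1 (x' - x) := hx'.sub hf hx
  have hy : sMem f 1 y := hx.add hf (hΔ.smul τ)
  have he : sMem f 0 e := (hΔ.zero_of_one hf hmono).sub hf (hv.smul r)
  have hPv : sMem f 0 (W.P y v - W.P x v) := (W.mem_P _ _ hy hv).sub hf (W.mem_P _ _ hx hv)
  refine ⟨y, hy, ?_, ?_⟩
  · rw [show y - x = τ • (x' - x) by simp [y], snrm_smul, abs_of_pos hτ.1]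
    exact mul_le_of_le_one_left snrm_nonneg hτ.2.le
  have hsplit : W.P y (x' - x) = W.P y e + r • W.P y v := by
    rw [← W.smul_P _ _ _ hy hv, ← W.add_P _ _ _ hy he (hv.smul r), sub_add_cancel]
  have hident : W.V x' ν - W.V x ν - r * (ζ ν * √(f ν) * v ν + W.P x v ν)
      = ζ ν * √(f ν) * e ν + W.P y e ν + r * (W.P y v - W.P x v) ν := by
    simp only [hmvt, hsplit, sF, e, Pi.add_apply, Pi.sub_apply, Pi.smul_apply, smul_eq_mul]
    ring
  have hζe : |ζ ν * √(f ν) * e ν| ≤ |ζ ν| * √(f ν) * snrm f 0 e := by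
    rw [abs_mul, abs_mul, abs_of_nonneg (Real.sqrt_nonneg _)]
    gcongr
    exact abs_apply_le_snrm_zero he ν
  have hPe : |W.P y e ν| ≤ c * snrm f 0 e :=
    (abs_apply_le_snrm_zero (W.mem_P _ _ hy he) ν).trans (hW.nrm_P_le hy he)
  have hrP : |r * (W.P y v - W.P x v) ν| ≤ |r| * snrm f 0 (W.P y v - W.P x v) := by
    rw [abs_mul]
    exact mul_le_mul_of_nonneg_left (abs_apply_le_snrm_zero hPv ν) (abs_nonneg r)
  rw [hident]
  calc _ ≤ |ζ ν * √(f ν) * e ν| + |W.P y e ν| + |r * (W.P y v - W.P x v) ν| :=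
        abs_add_three _ _ _
    _ ≤ _ := by linarith

theorem UVF.ElementaryWith.hasDerivAt_V_comp (hf : ∀ ν, 0 < f ν) (hmono : Monotone f)
    (hW : W.ElementaryWith c) {T : ℝ} {w : ℝ → ℕ → ℝ} (hw : IsGradSol (sMem f) (snrm f) W.V T w)
    {s : ℝ} (hs : s ∈ Ioo (-T) T) (ν : ℕ) :
    HasDerivAt (fun r => W.V (w r) ν)
      (ζ ν * √(f ν) * W.V (w s) ν + W.P (w s) (W.V (w s)) ν) s := by
  obtain ⟨hw1, hderiv, -⟩ := hw
  have hws := hw1.1 s hs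
  have hv := W.mem_V_one _ hws
  set K := |ζ ν| * √(f ν) + c
  have hK : 0 ≤ K := by have := hW.pos; positivity
  refine (hasDerivWithinAt_of_forall_exists_abs_le fun ε hε => ?_).hasDerivAt
    (Ioo_mem_nhds hs.1 hs.2)
  obtain ⟨δP, hδP, hP⟩ := W.cont_P _ _ hws hv (ε / 2) (by positivity)
  obtain ⟨δw, hδw, hwc⟩ := hw1.2 s hs δP hδP
  obtain ⟨δD, hδD, hD⟩ := hderiv s hs (ε / (2 * (K + 1))) (by positivity)
  refine ⟨min δw δD, lt_min hδw hδD, fun r hr hrs => ?_⟩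
  rcases eq_or_ne r s with rfl | hne
  · simp
  obtain ⟨y, hy, hyw, hest⟩ := hW.exists_abs_V_sub_V_sub_le hf hmono hws (hw1.1 r hr) hv (r - s) ν
  have he : snrm f 0 (w r - w s - (r - s) • W.V (w s)) ≤ |r - s| * (ε / (2 * (K + 1))) := by
    rw [show w r - w s - (r - s) • W.V (w s) = (r - s) • ((r - s)⁻¹ • (w r - w s) - W.V (w s)) by
      rw [smul_sub, smul_smul, mul_inv_cancel₀ (sub_ne_zero.mpr hne), one_smul], snrm_smul]
    exact mul_le_mul_of_nonneg_left (hD r hr hne (hrs.trans_le (min_le_right _ _))).le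
      (abs_nonneg _)
  have hPy : snrm f 0 (W.P y (W.V (w s)) - W.P (w s) (W.V (w s))) < ε / 2 :=
    hP y _ hy hv (hyw.trans_lt (hwc r hr (hrs.trans_le (min_le_left _ _))))
      (by simpa [snrm] using hδP)
  have hKε : K * (ε / (2 * (K + 1))) ≤ ε / 2 := by
    rw [mul_div_assoc', div_le_div_iff₀ (by positivity) two_pos]
    nlinarith
  calc _ ≤ K * (|r - s| * (ε / (2 * (K + 1)))) + |r - s| * (ε / 2) := by
        refine hest.trans (add_le_add (mul_le_mul_of_nonneg_left he hK) ?_)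
        exact mul_le_mul_of_nonneg_left hPy.le (abs_nonneg _)
    _ ≤ ε * |r - s| := by nlinarith [abs_nonneg (r - s)]

theorem UVF.continuousOn_P_apply (hf : ∀ ν, 0 < f ν) {I : Set ℝ} {w u : ℝ → ℕ → ℝ}
    (hw : ContCurveOn (sMem f) (snrm f) 1 I w) (hu : ContCurveOn (sMem f) (snrm f) 0 I u)
    (ν : ℕ) : ContinuousOn (fun r => W.P (w r) (u r) ν) I := by
  rw [Metric.continuousOn_iff]
  intro s hs ε hε
  obtain ⟨δP, hδP, hP⟩ := W.cont_P _ _ (hw.1 s hs) (hu.1 s hs) ε hε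
  obtain ⟨δw, hδw, hwc⟩ := hw.2 s hs δP hδP
  obtain ⟨δu, hδu, huc⟩ := hu.2 s hs δP hδP
  refine ⟨min δw δu, lt_min hδw hδu, fun r hr hrs => ?_⟩
  rw [Real.dist_eq] at hrs ⊢
  have hmem := (W.mem_P _ _ (hw.1 r hr) (hu.1 r hr)).sub hf (W.mem_P _ _ (hw.1 s hs) (hu.1 s hs))
  exact (abs_apply_le_snrm_zero hmem ν).trans_lt <| hP _ _ (hw.1 r hr) (hu.1 r hr)
    (hwc r hr (hrs.trans_le (min_le_left _ _))) (huc r hr (hrs.trans_le (min_le_right _ _)))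

theorem UVF.ElementaryWith.sq_snrm_V_le (hf : ∀ ν, 0 < f ν) (hmono : Monotone f)
    (hW : W.ElementaryWith c) {T κ : ℝ} {w : ℝ → ℕ → ℝ}
    (hw : IsGradSol (sMem f) (snrm f) W.V T w)
    (hL2 : eL2 f 0 (Ioo (-T) T) (fun s => W.V (w s)) ≤ ENNReal.ofReal (κ ^ 2))
    {a s b : ℝ} (ha : a ∈ Ioo (-T) T) (hb : b ∈ Ioo (-T) T) (has : a ≤ s) (hsb : s ≤ b) :
    snrm f 0 (W.V (w s)) ^ 2 ≤ 3 * snrm f 0 (W.V (w a)) ^ 2 + 3 * snrm f 0 (W.V (w b)) ^ 2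
      + 3 * (b - a) * (c ^ 2 * κ ^ 2) := by
  have hab := has.trans hsb
  have hsub : Icc a b ⊆ Ioo (-T) T := fun r hr => ⟨ha.1.trans_le hr.1, hr.2.trans_lt hb.2⟩
  have hv : ∀ r ∈ Ioo (-T) T, sMem f 0 (W.V (w r)) := fun r hr => W.mem_V_one _ (hw.1.1 r hr)
  have hg : ∀ ν, ContinuousOn (fun r => W.P (w r) (W.V (w r)) ν) (Icc a b) := fun ν =>
    (W.continuousOn_P_apply hf hw.1 hw.2.2 ν).mono hsub
  have hPv : ∀ N : Finset ℕ, ∫ r in a..b, ∑ ν ∈ N, W.P (w r) (W.V (w r)) ν ^ 2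
      ≤ c ^ 2 * κ ^ 2 := by
    intro N
    rw [intervalIntegral.integral_of_le hab]
    refine setIntegral_le_mul_of_le_mul_of_lintegral_le measurableSet_Ioc (sq_nonneg c)
      (sq_nonneg κ) ((continuousOn_finsetSum N fun ν _ => (hg ν).pow 2).integrableOn_Icc.mono_set
        Ioc_subset_Icc_self) (fun r _ => Finset.sum_nonneg fun ν _ => sq_nonneg _)
      (fun r hr => ?_) ((lintegral_mono_set (Ioc_subset_Icc_self.trans hsub)).trans hL2)
    have hr1 := hw.1.1 r (hsub (Ioc_subset_Icc_self hr))
    have hr0 := W.mem_V_one _ hr1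
    calc _ ≤ snrm f 0 (W.P (w r) (W.V (w r))) ^ 2 :=
          sum_sq_le_sq_snrm_zero (W.mem_P _ _ hr1 hr0) N
      _ ≤ (c * snrm f 0 (W.V (w r))) ^ 2 := by
          gcongr
          · exact snrm_nonneg
          · exact hW.nrm_P_le hr1 hr0
      _ = c ^ 2 * snrm f 0 (W.V (w r)) ^ 2 := mul_pow _ _ _
  refine sq_snrm_zero_le_of_forall_sum_le fun N => ?_
  have hmodes := sum_sq_le_of_hasDerivAt N (v := fun r ν => W.V (w r) ν) has hsb
    (fun ν _ r hr => hW.hasDerivAt_V_comp hf hmono hw (hsub hr) ν) (fun ν _ => hg ν)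
  have hva := sum_sq_le_sq_snrm_zero (hv a ha) N
  have hvb := sum_sq_le_sq_snrm_zero (hv b hb) N
  have hba : 0 ≤ 3 * (b - a) := by linarith
  nlinarith [mul_le_mul_of_nonneg_left (hPv N) hba]

theorem UVF.ElementaryWith.sq_snrm_V_le_of_mem_Ioo (hf : ∀ ν, 0 < f ν) (hmono : Monotone f)
    (hW : W.ElementaryWith c) {T T' κ : ℝ} (hT'T : T' < T) {w : ℝ → ℕ → ℝ}
    (hw : IsGradSol (sMem f) (snrm f) W.V T w)
    (hL2 : eL2 f 0 (Ioo (-T) T) (fun s => W.V (w s)) ≤ ENNReal.ofReal (κ ^ 2))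
    {s : ℝ} (hs : s ∈ Ioo (-T') T') :
    snrm f 0 (W.V (w s)) ^ 2 ≤ 6 * ((κ ^ 2 + 1) / (T - T')) + 6 * T * (c ^ 2 * κ ^ 2) := by
  have hcollar : ∀ α β, α < β → Ioo α β ⊆ Ioo (-T) T →
      ∃ t ∈ Ioo α β, snrm f 0 (W.V (w t)) ^ 2 ≤ (κ ^ 2 + 1) / (β - α) := fun α β hαβ hsub =>
    exists_mem_Ioo_le_of_lintegral_le hαβ (sq_nonneg κ) ((lintegral_mono_set hsub).trans hL2)
  have hT' : -T' < T' := hs.1.trans hs.2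
  obtain ⟨a, ha, hva⟩ := hcollar (-T) (-T') (by linarith) (Ioo_subset_Ioo_right (by linarith))
  obtain ⟨b, hb, hvb⟩ := hcollar T' T hT'T (Ioo_subset_Ioo_left (by linarith))
  rw [show -T' - -T = T - T' by ring] at hva
  have := hW.sq_snrm_V_le hf hmono hw hL2 (s := s) ⟨ha.1, by linarith [ha.2]⟩
    ⟨by linarith [hb.1], hb.2⟩ (by linarith [ha.2, hs.1]) (by linarith [hb.1, hs.2])
  nlinarith [ha.1, hb.2, mul_nonneg (sq_nonneg c) (sq_nonneg κ)]

end ElementaryField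

theorem elementary_C1_bound_general
    (f ζ : ℕ → ℝ) (hf : GoodWeight f)
    (W : UVF (sMem f) (snrm f) (sF f ζ)) (hW : W.Elementary)
    (T T' κ : ℝ) (hT'T : T' < T) :
    ∃ c > 0, ∀ w : ℝ → ℕ → ℝ,
      IsGradSol (sMem f) (snrm f) W.V T w →
      eL2 f 0 (Ioo (-T) T) (fun s => W.V (w s)) ≤ ENNReal.ofReal (κ ^ 2) →
      ∀ s ∈ Ioo (-T') T',
        snrm f 1 (w s) ≤ c ∧ snrm f 0 (w s) ≤ c ∧ snrm f 0 (W.V (w s)) ≤ c := by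
  obtain ⟨c, hW⟩ := hW
  obtain ⟨hpos, hmono, -⟩ := hf
  have hc := hW.pos
  set cV := √(6 * ((κ ^ 2 + 1) / (T - T')) + 6 * T * (c ^ 2 * κ ^ 2))
  set c1 := c * (cV + 1)
  have hcV : 0 ≤ cV := Real.sqrt_nonneg _
  have hc1 : 0 ≤ c1 := by positivity
  have hc0 : 0 ≤ √(f 0)⁻¹ * c1 := by positivity
  refine ⟨cV + c1 + √(f 0)⁻¹ * c1 + 1, by positivity, fun w hw hL2 s hs => ?_⟩
  have hws := hw.1.1 s ⟨by linarith [hs.1], by linarith [hs.2]⟩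
  have hV : snrm f 0 (W.V (w s)) ≤ cV :=
    Real.le_sqrt_of_sq_le (hW.sq_snrm_V_le_of_mem_Ioo hpos hmono hT'T hw hL2 hs)
  have h1 : snrm f 1 (w s) ≤ c1 :=
    (hW.nrm_one_le hws).trans (mul_le_mul_of_nonneg_left (by linarith) hc.le)
  have h0 : snrm f 0 (w s) ≤ √(f 0)⁻¹ * c1 :=
    (snrm_zero_le hpos hmono hws).trans (mul_le_mul_of_nonneg_left h1 (Real.sqrt_nonneg _))
  exact ⟨by linarith, by linarith, by linarith⟩

/-- **Proposition 4.1.** Let `V` be an elementary unregularized vector field and `w` a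
solution of `∂ₛ w = V(w)` on `I_T` with `‖∂ₛw‖_{L²(I_T,H_0)} ≤ κ`. Then for every
`0 < T' < T` there is a constant `c = c(κ,T')` with
`‖w‖_{C⁰(I_{T'},H_1) ∩ C¹(I_{T'},H_0)} ≤ c`. -/
theorem elementary_C1_bound
    (f ζ : ℕ → ℝ) (hf : GoodWeight f) (hζ : Signs ζ)
    (W : UVF (sMem f) (snrm f) (sF f ζ)) (hW : W.Elementary)
    (T T' κ : ℝ) (hT' : 0 < T') (hT'T : T' < T) :
    ∃ c > 0, ∀ w : ℝ → ℕ → ℝ,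
      IsGradSol (sMem f) (snrm f) W.V T w →
      eL2 f 0 (Ioo (-T) T) (fun s => W.V (w s)) ≤ ENNReal.ofReal (κ ^ 2) →
      ∀ s ∈ Ioo (-T') T',
        snrm f 1 (w s) ≤ c ∧ snrm f 0 (w s) ≤ c ∧ snrm f 0 (W.V (w s)) ≤ c :=
  elementary_C1_bound_general f ζ hf W hW T T' κ hT'T

end NLGF
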